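/- arXiv:1210.5232 — 3 statements merged into one kernel-verified Lean document; each statement's English description precedes it below -/
import Mathlib

section
/- Let the network be a finite connected simple graph. If the initial state u₀ contains at least one seed, then all nodes are eventually n-periodic: there exists a time T such that u_{t+n}(x) = u_t(x) for every vertex x and every t ≥ T. -/
/- The Greenberg–Hastings update rule on a simple graph `G` with state space `ZMod n`:
`𝒢u(x) = u(x)+1` if `u(x) ≠ 0`; `𝒢u(x) = 1` if `u(x) = 0` and some neighbor is in state `1`;
`𝒢u(x) = 0` otherwise. -/
open Classical in
noncomputable def ghUpdate {V : Type*} (n : ℕ) (G : SimpleGraph V) (u : V → ZMod n) :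
    V → ZMod n :=
  fun x => if u x = 0 then (if ∃ y, G.Adj x y ∧ u y = 1 then 1 else 0) else u x + 1
/- A state `u` has a seed: a closed walk `x₀, …, x_K = x₀` with `u (x i) = i mod n`. -/
def hasSeed {V : Type*} (n : ℕ) (G : SimpleGraph V) (u : V → ZMod n) : Prop :=
  ∃ (K : ℕ) (x : ℕ → V), 1 ≤ K ∧ x K = x 0 ∧ (∀ i < K, G.Adj (x i) (x (i + 1))) ∧
    ∀ i ≤ K, u (x i) = (i : ZMod n)

/-!
Along a seed the excitation travels round the closed walk forever: at time `t` the `i`-th vertex of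
the walk is in state `i + t`, so the seed vertices rotate, `u_{t+1} = u_t + 1`. Rotation spreads to
neighbours: if `y` rotates from some time on and `x ~ y`, the lag `(u_t x - u_t y + 1).val < n` is
unchanged when `x` advances and drops by one when `x` rests in state `0` (it cannot rest at lag `0`,
since `y` is then in state `1`). So the lag stabilises and `x` rotates from then on. By
connectedness every vertex eventually rotates, and a rotating vertex is `n`-periodic.
-/

open Filter

lemma ZMod.val_sub_one_lt {n : ℕ} [NeZero n] {z : ZMod n} (hz : z ≠ 0) :
    (z - 1).val < z.val := by
  rcases eq_or_ne n 1 with rfl | hn1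
  · exact absurd (Subsingleton.elim z 0) hz
  have hz_pos : 0 < z.val := ZMod.val_pos.2 hz
  rw [ZMod.val_sub (by rwa [ZMod.val_one'' hn1]), ZMod.val_one'' hn1]
  exact Nat.sub_lt hz_pos one_pos

section

variable {V : Type*} {n : ℕ} {G : SimpleGraph V}

lemma ghUpdate_eq_add_one {u : V → ZMod n} {x : V} (h : u x = 0 → ∃ y, G.Adj x y ∧ u y = 1) :
    ghUpdate n G u x = u x + 1 := by
  by_cases hx : u x = 0
  · simp [ghUpdate, hx, h hx]
  · simp [ghUpdate, hx]

lemma ghUpdate_eq_add_one_or_rest (u : V → ZMod n) (x : V) :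
    ghUpdate n G u x = u x + 1 ∨ u x = 0 ∧ ghUpdate n G u x = 0 ∧ ∀ y, G.Adj x y → u y ≠ 1 := by
  by_cases h : u x = 0 → ∃ y, G.Adj x y ∧ u y = 1
  · exact Or.inl (ghUpdate_eq_add_one h)
  · obtain ⟨hx, hrest⟩ : u x = 0 ∧ ¬∃ y, G.Adj x y ∧ u y = 1 := Classical.not_imp.1 h
    exact Or.inr ⟨hx, by simp [ghUpdate, hx, hrest], fun y hy hy1 => hrest ⟨y, hy, hy1⟩⟩

lemma natCast_eq_zero_of_closed {u : V → ZMod n} {K : ℕ} {x : ℕ → V} (hclosed : x K = x 0)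
    (hval : ∀ i ≤ K, u (x i) = i) : (K : ZMod n) = 0 := by
  rw [← hval K le_rfl, hclosed, hval 0 (Nat.zero_le _), Nat.cast_zero]

lemma hasSeed.neZero {u : V → ZMod n} (h : hasSeed n G u) : NeZero n := by
  obtain ⟨K, x, hK, hclosed, -, hval⟩ := h
  refine ⟨fun hn => ?_⟩
  subst hn
  exact absurd (Nat.cast_eq_zero.1 (natCast_eq_zero_of_closed hclosed hval)) (by omega)

def EventuallyRotates (u : ℕ → V → ZMod n) (x : V) : Prop :=
  ∀ᶠ t in atTop, u (t + 1) x = u t x + 1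

section Orbit

variable {u : ℕ → V → ZMod n} (hu : ∀ t, u (t + 1) = ghUpdate n G (u t))
include hu

lemma exists_forall_rotates_of_hasSeed (h : hasSeed n G (u 0)) :
    ∃ z, ∀ t, u (t + 1) z = u t z + 1 := by
  obtain ⟨K, x, hK, hclosed, hadj, hval⟩ := h
  have hK0 : (K : ZMod n) = 0 := natCast_eq_zero_of_closed hclosed hval
  have hstep : ∀ t, (∀ i ≤ K, u t (x i) = i + t) → ∀ i < K, u (t + 1) (x i) = u t (x i) + 1 :=
    fun t ht i hi => by
      rw [hu]
      refine ghUpdate_eq_add_one fun h0 => ⟨x (i + 1), hadj i hi, ?_⟩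
      rw [ht (i + 1) hi, Nat.cast_succ, add_right_comm, ← ht i hi.le, h0, zero_add]
  have hwave : ∀ t, ∀ i ≤ K, u t (x i) = i + t := by
    intro t
    induction t with
    | zero => simpa using hval
    | succ t ih =>
      have hlt : ∀ i < K, u (t + 1) (x i) = i + (t + 1 : ℕ) := fun i hi => by
        rw [hstep t ih i hi, ih i hi.le, Nat.cast_succ, add_assoc]
      intro i hi
      rcases hi.lt_or_eq with hi | rfl
      · exact hlt i hi
      · rw [hclosed, hlt 0 hK, hK0, Nat.cast_zero]
  exact ⟨x 0, fun t => hstep t (hwave t) 0 hK⟩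

lemma EventuallyRotates.of_adj [NeZero n] {x y : V} (hxy : G.Adj x y)
    (hy : EventuallyRotates u y) : EventuallyRotates u x := by
  obtain ⟨T, hT⟩ := eventually_atTop.1 hy
  set lag : ℕ → ℕ := fun k => (u (T + k) x - u (T + k) y + 1).val
  have hstep : ∀ k, u (T + k + 1) x = u (T + k) x + 1 ∨ lag (k + 1) < lag k := by
    intro k
    have hy' := hT (T + k) le_self_add
    rw [hu] at hy' ⊢
    rcases ghUpdate_eq_add_one_or_rest (u (T + k)) x with hx | ⟨hx0, hx, hrest⟩
    · exact Or.inl hx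
    · right
      have hne : u (T + k) x - u (T + k) y + 1 ≠ 0 := fun h => hrest y hxy <| by
        rw [hx0] at h
        linear_combination -h
      show (u (T + (k + 1)) x - u (T + (k + 1)) y + 1).val < _
      rw [← add_assoc, hu, hx, hy']
      convert ZMod.val_sub_one_lt hne using 2
      rw [hx0]
      ring
  have hanti : Antitone lag := antitone_nat_of_succ_le fun k => by
    rcases hstep k with hx | hlt
    · show (u (T + (k + 1)) x - u (T + (k + 1)) y + 1).val ≤ _
      rw [← add_assoc, hx, hT _ le_self_add]
      exact le_of_eq (congrArg ZMod.val (by ring))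
    · exact hlt.le
  obtain ⟨k₀, hk₀⟩ := WellFoundedLT.antitone_chain_condition hanti
  refine eventually_atTop.2 ⟨T + k₀, fun t ht => ?_⟩
  obtain ⟨k, rfl⟩ := Nat.exists_eq_add_of_le ht
  rw [add_assoc T k₀ k]
  refine (hstep (k₀ + k)).resolve_right ?_
  rw [← hk₀ (k₀ + k + 1) (by omega), ← hk₀ (k₀ + k) (by omega)]
  exact lt_irrefl _

lemma EventuallyRotates.of_reachable [NeZero n] {x y : V} (hyx : G.Reachable y x)
    (hy : EventuallyRotates u y) : EventuallyRotates u x := by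
  rw [SimpleGraph.reachable_iff_reflTransGen] at hyx
  induction hyx with
  | refl => exact hy
  | tail _ hadj ih => exact ih.of_adj hu hadj.symm

end Orbit

lemma apply_add_of_rotates {u : ℕ → V → ZMod n} {x : V} {t : ℕ}
    (h : ∀ s ≥ t, u (s + 1) x = u s x + 1) (k : ℕ) : u (t + k) x = u t x + k := by
  induction k with
  | zero => simp
  | succ k ih => rw [← add_assoc, h _ le_self_add, ih, Nat.cast_succ, add_assoc]

end

theorem stmt_4_general {V : Type*} [Fintype V] (n : ℕ) (G : SimpleGraph V)
    (hconn : G.Connected) (u₀ : V → ZMod n) (hseed : hasSeed n G u₀) :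
    ∃ T : ℕ, ∀ (x : V) (t : ℕ), T ≤ t →
      (ghUpdate n G)^[t + n] u₀ x = (ghUpdate n G)^[t] u₀ x := by
  set u : ℕ → V → ZMod n := fun t => (ghUpdate n G)^[t] u₀
  have hu : ∀ t, u (t + 1) = ghUpdate n G (u t) := fun t => Function.iterate_succ_apply' _ _ _
  have := hseed.neZero
  obtain ⟨z, hz⟩ := exists_forall_rotates_of_hasSeed hu hseed
  have hall : ∀ᶠ t in atTop, ∀ x, u (t + 1) x = u t x + 1 := eventually_all.2 fun x =>
    EventuallyRotates.of_reachable hu (hconn z x) (Eventually.of_forall hz)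
  obtain ⟨T, hT⟩ := eventually_atTop.1 hall
  refine ⟨T, fun x t ht => ?_⟩
  calc u (t + n) x = u t x + n := apply_add_of_rotates (fun s hs => hT s (ht.trans hs) x) n
    _ = u t x := by rw [ZMod.natCast_self, add_zero]

theorem stmt_4 {V : Type*} [Fintype V] (n : ℕ) (hn : 2 ≤ n) (G : SimpleGraph V)
    (hconn : G.Connected) (u₀ : V → ZMod n) (hseed : hasSeed n G u₀) :
    ∃ T : ℕ, ∀ (x : V) (t : ℕ), T ≤ t →
      (ghUpdate n G)^[t + n] u₀ x = (ghUpdate n G)^[t] u₀ x :=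
  stmt_4_general n G hconn u₀ hseed
end

section
/- Let the network be a finite connected simple graph and let u be a continuous state (u(x) − u(y) ∈ {−1, 0, 1} in ℤ/nℤ for all adjacent x, y). Then the system eventually dies out — i.e. there exists T with u_T(x) = 0 for every vertex x — if and only if u contains no defect, i.e. deg(u, W) = 0 for every closed walk W. -/
/- A closed walk of length `K` in `G`, encoded as `x : ℕ → V` with `x K = x 0`,
`K ≥ 1`, consecutive vertices adjacent. -/
def isClosedWalk {V : Type*} (G : SimpleGraph V) (K : ℕ) (x : ℕ → V) : Prop :=
  1 ≤ K ∧ x K = x 0 ∧ ∀ i < K, G.Adj (x i) (x (i + 1))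

/- The integer in `{-1, 0, 1}` congruent to `a : ZMod n`, for `a ∈ {-1, 0, 1}` and `n ≥ 3`. -/
def dInt {n : ℕ} (a : ZMod n) : ℤ :=
  if a = 0 then 0 else if a = 1 then 1 else -1

/- `u` is continuous on the consecutive pairs of the walk `x` of length `K`. -/
def contOn {V : Type*} {n : ℕ} (u : V → ZMod n) (K : ℕ) (x : ℕ → V) : Prop :=
  ∀ i < K, u (x (i + 1)) - u (x i) ∈ ({-1, 0, 1} : Set (ZMod n))

/- The degree of the state `u` on the closed walk `x` of length `K`:
`(1/n) ∑ dInt (u(x_{i+1}) - u(x_i))`. -/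
noncomputable def degW {V : Type*} (n : ℕ) (u : V → ZMod n) (K : ℕ) (x : ℕ → V) : ℚ :=
  ((∑ i ∈ Finset.range K, dInt (u (x (i + 1)) - u (x i)) : ℤ) : ℚ) / (n : ℚ)

/- A state is continuous if differences across every edge lie in `{-1, 0, 1}`. -/
def contState {V : Type*} {n : ℕ} (G : SimpleGraph V) (u : V → ZMod n) : Prop :=
  ∀ x y : V, G.Adj x y → u x - u y ∈ ({-1, 0, 1} : Set (ZMod n))

/-! ## Auxiliary -/

open Classical in
noncomputable def fireZ {V : Type*} (n : ℕ) (G : SimpleGraph V) (u : V → ZMod n) (x : V) : ℤ :=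
  if u x = 0 ∧ ¬ ∃ y, G.Adj x y ∧ u y = 1 then 0 else 1

lemma fireZ_mem {V : Type*} (n : ℕ) (G : SimpleGraph V) (u : V → ZMod n) (x : V) :
    fireZ n G u x = 0 ∨ fireZ n G u x = 1 := by
  unfold fireZ; split_ifs <;> simp

lemma fireZ_eq_zero {V : Type*} {n : ℕ} {G : SimpleGraph V} {u : V → ZMod n} {x : V}
    (h : fireZ n G u x = 0) : u x = 0 ∧ ¬ ∃ y, G.Adj x y ∧ u y = 1 := by
  unfold fireZ at h; split_ifs at h with hc
  · exact hc
  · simp at h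

lemma ghUpdate_eq {V : Type*} (n : ℕ) (G : SimpleGraph V) (u : V → ZMod n) (x : V) :
    ghUpdate n G u x = u x + ((fireZ n G u x : ℤ) : ZMod n) := by
  classical
  by_cases h0 : u x = 0
  · by_cases he : ∃ y, G.Adj x y ∧ u y = 1
    · simp [ghUpdate, fireZ, h0, he]
    · simp [ghUpdate, fireZ, h0, he]
  · simp [ghUpdate, fireZ, h0]

lemma zmod_facts {n : ℕ} (hn : 3 ≤ n) :
    (1 : ZMod n) ≠ 0 ∧ (-1 : ZMod n) ≠ 0 ∧ (-1 : ZMod n) ≠ 1 := by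
  haveI : NeZero n := ⟨by omega⟩
  have h1 : ((1 : ℕ) : ZMod n) ≠ 0 := by
    rw [Ne, ZMod.natCast_eq_zero_iff]
    intro h; have := Nat.le_of_dvd (by norm_num) h; omega
  have h2 : ((2 : ℕ) : ZMod n) ≠ 0 := by
    rw [Ne, ZMod.natCast_eq_zero_iff]
    intro h; have := Nat.le_of_dvd (by norm_num) h; omega
  have h1' : (1 : ZMod n) ≠ 0 := by simpa using h1
  refine ⟨h1', ?_, ?_⟩
  · intro h; exact h1' (neg_eq_zero.mp h)
  · intro h
    apply h2
    have : (2 : ZMod n) = 1 - (-1) := by ring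
    rw [h] at this
    simpa using this

lemma dInt_mem {n : ℕ} (a : ZMod n) : dInt a = -1 ∨ dInt a = 0 ∨ dInt a = 1 := by
  unfold dInt; split_ifs <;> simp

lemma cast_dInt {n : ℕ} (hn : 3 ≤ n) {a : ZMod n} (ha : a ∈ ({-1, 0, 1} : Set (ZMod n))) :
    ((dInt a : ℤ) : ZMod n) = a := by
  obtain ⟨f1, f2, f3⟩ := zmod_facts hn
  simp only [Set.mem_insert_iff, Set.mem_singleton_iff] at ha
  unfold dInt
  rcases ha with h | h | h <;> subst h
  · rw [if_neg f2, if_neg f3]; push_cast; ring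
  · simp
  · rw [if_neg f1, if_pos rfl]; push_cast; ring

lemma dInt_intCast {n : ℕ} (hn : 3 ≤ n) {e : ℤ} (he : e = -1 ∨ e = 0 ∨ e = 1) :
    dInt ((e : ZMod n)) = e := by
  obtain ⟨f1, f2, f3⟩ := zmod_facts hn
  unfold dInt
  rcases he with h | h | h <;> subst h <;> push_cast
  · rw [if_neg f2, if_neg f3]
  · simp
  · rw [if_neg f1, if_pos rfl]

/-- The key per-edge lemma. -/
lemma gh_key {V : Type*} {n : ℕ} (hn : 3 ≤ n) (G : SimpleGraph V) (u : V → ZMod n)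
    (hu : contState G u) {x y : V} (hadj : G.Adj x y) :
    (dInt (u y - u x) + fireZ n G u y - fireZ n G u x = -1 ∨
      dInt (u y - u x) + fireZ n G u y - fireZ n G u x = 0 ∨
      dInt (u y - u x) + fireZ n G u y - fireZ n G u x = 1) ∧
    ghUpdate n G u y - ghUpdate n G u x =
      ((dInt (u y - u x) + fireZ n G u y - fireZ n G u x : ℤ) : ZMod n) := by
  have hc : u y - u x ∈ ({-1, 0, 1} : Set (ZMod n)) := hu y x hadj.symm
  have hrep : ((dInt (u y - u x) : ℤ) : ZMod n) = u y - u x := cast_dInt hn hc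
  constructor
  · rcases dInt_mem (u y - u x) with hd | hd | hd <;>
      rcases fireZ_mem n G u x with hfx | hfx <;>
      rcases fireZ_mem n G u y with hfy | hfy
    all_goals try (rw [hd, hfx, hfy]; norm_num)
    -- remaining bad cases
    · -- hd = -1, fx = 1, fy = 0
      exfalso
      obtain ⟨hy0, hno⟩ := fireZ_eq_zero hfy
      have hval : u y - u x = -1 := by rw [← hrep, hd]; push_cast; ring
      have hx1 : u x = 1 := by
        have : u x = u y + 1 := by
          have := hval; rw [hy0] at this
          have h2 : - u x = -1 := by simpa using this
          rw [hy0]; simp; linear_combination -h2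
        simpa [hy0] using this
      exact hno ⟨x, hadj.symm, hx1⟩
    · -- hd = 1, fx = 0, fy = 1
      exfalso
      obtain ⟨hx0, hno⟩ := fireZ_eq_zero hfx
      have hval : u y - u x = 1 := by rw [← hrep, hd]; push_cast; ring
      have hy1 : u y = 1 := by rw [hx0] at hval; simpa using hval
      exact hno ⟨y, hadj, hy1⟩
  · rw [ghUpdate_eq, ghUpdate_eq]
    push_cast
    rw [hrep]
    ring

lemma contState_ghUpdate {V : Type*} {n : ℕ} (hn : 3 ≤ n) (G : SimpleGraph V)
    (u : V → ZMod n) (hu : contState G u) : contState G (ghUpdate n G u) := by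
  intro a b hab
  obtain ⟨he, heq⟩ := gh_key hn G u hu hab.symm
  rw [heq]
  rcases he with h | h | h <;> rw [h] <;> simp

/-! ## Walk sums -/

def wsum {V : Type*} {n : ℕ} {G : SimpleGraph V} (u : V → ZMod n) :
    {a b : V} → G.Walk a b → ℤ
  | _, _, SimpleGraph.Walk.nil => 0
  | a, _, SimpleGraph.Walk.cons (v := c) _ p => dInt (u c - u a) + wsum u p

lemma wsum_append {V : Type*} {n : ℕ} {G : SimpleGraph V} (u : V → ZMod n)
    {a b c : V} (p : G.Walk a b) (q : G.Walk b c) :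
    wsum u (p.append q) = wsum u p + wsum u q := by
  induction p with
  | nil => simp [wsum]
  | cons h p ih => simp [wsum, ih, add_assoc]

lemma dInt_neg_edge {V : Type*} {n : ℕ} (hn : 3 ≤ n) {G : SimpleGraph V} {u : V → ZMod n}
    (hu : contState G u) {a b : V} (hadj : G.Adj a b) :
    dInt (u a - u b) = - dInt (u b - u a) := by
  obtain ⟨f1, f2, f3⟩ := zmod_facts hn
  have hc : u b - u a ∈ ({-1, 0, 1} : Set (ZMod n)) := hu b a hadj.symm
  simp only [Set.mem_insert_iff, Set.mem_singleton_iff] at hc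
  have hab : u a - u b = -(u b - u a) := by ring
  rcases hc with h | h | h
  · have h' : u a - u b = 1 := by rw [hab, h]; ring
    rw [h, h']; unfold dInt
    rw [if_neg f1, if_pos rfl, if_neg f2, if_neg f3]; norm_num
  · have h' : u a - u b = 0 := by rw [hab, h, neg_zero]
    rw [h, h']; simp [dInt]
  · have h' : u a - u b = -1 := by rw [hab, h]
    rw [h, h']; unfold dInt
    rw [if_neg f2, if_neg f3, if_neg f1, if_pos rfl]

lemma wsum_reverse {V : Type*} {n : ℕ} (hn : 3 ≤ n) {G : SimpleGraph V} {u : V → ZMod n}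
    (hu : contState G u) {a b : V} (p : G.Walk a b) :
    wsum u p.reverse = - wsum u p := by
  induction p with
  | nil => simp [wsum]
  | cons h p ih =>
    rw [SimpleGraph.Walk.reverse_cons, wsum_append, ih]
    simp [wsum, dInt_neg_edge hn hu h]

lemma wsum_eq_sum {V : Type*} {n : ℕ} {G : SimpleGraph V} (u : V → ZMod n)
    {a b : V} (p : G.Walk a b) :
    wsum u p = ∑ i ∈ Finset.range p.length, dInt (u (p.getVert (i + 1)) - u (p.getVert i)) := by
  induction p with
  | nil => simp [wsum]
  | cons h p ih =>
    rw [SimpleGraph.Walk.length_cons, Finset.sum_range_succ']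
    simp only [SimpleGraph.Walk.getVert_cons_succ, SimpleGraph.Walk.getVert_zero]
    rw [wsum, ih]
    ring

lemma wsum_cast {V : Type*} {n : ℕ} (hn : 3 ≤ n) {G : SimpleGraph V} {u : V → ZMod n}
    (hu : contState G u) {a b : V} (p : G.Walk a b) :
    ((wsum u p : ℤ) : ZMod n) = u b - u a := by
  induction p with
  | nil => simp [wsum]
  | cons h p ih =>
    rw [wsum]
    push_cast
    rw [ih, cast_dInt hn (hu _ _ h.symm)]
    ring

lemma closed_wsum_zero {V : Type*} {n : ℕ} (hn : 3 ≤ n) {G : SimpleGraph V} {u : V → ZMod n}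
    (hdeg : ∀ (K : ℕ) (x : ℕ → V), isClosedWalk G K x → degW n u K x = 0)
    {a : V} (p : G.Walk a a) : wsum u p = 0 := by
  rcases Nat.eq_zero_or_pos p.length with h0 | hpos
  · cases p with
    | nil => simp [wsum]
    | cons h q => simp [SimpleGraph.Walk.length_cons] at h0
  · have hcw : isClosedWalk G p.length p.getVert :=
      ⟨hpos, by simp, fun i hi => p.adj_getVert_succ hi⟩
    have hd := hdeg p.length p.getVert hcw
    unfold degW at hd
    have hn0 : (n : ℚ) ≠ 0 := by positivity
    rw [div_eq_zero_iff] at hd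
    rcases hd with hd | hd
    · rw [wsum_eq_sum]
      exact_mod_cast hd
    · exact absurd hd hn0

lemma wsum_welldef {V : Type*} {n : ℕ} (hn : 3 ≤ n) {G : SimpleGraph V} {u : V → ZMod n}
    (hu : contState G u)
    (hdeg : ∀ (K : ℕ) (x : ℕ → V), isClosedWalk G K x → degW n u K x = 0)
    {a b : V} (p q : G.Walk a b) : wsum u p = wsum u q := by
  have h := closed_wsum_zero hn hdeg (p.append q.reverse)
  rw [wsum_append, wsum_reverse hn hu] at h
  omega

/-! ## Heights -/

noncomputable def heights {V : Type*} (n : ℕ) (G : SimpleGraph V) (u : V → ZMod n)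
    (h0 : V → ℤ) : ℕ → V → ℤ
  | 0 => h0
  | (t + 1) => fun v => heights n G u h0 t v + fireZ n G ((ghUpdate n G)^[t] u) v

lemma heights_invariant {V : Type*} {n : ℕ} (hn : 3 ≤ n) (G : SimpleGraph V)
    (u : V → ZMod n) (h0 : V → ℤ) (B : ℤ) (hBmod : ((B : ℤ) : ZMod n) = 0)
    (hcast0 : ∀ v, ((h0 v : ℤ) : ZMod n) = u v)
    (hedge0 : ∀ a b, G.Adj a b → h0 b - h0 a = dInt (u b - u a))
    (hb0 : ∀ v, h0 v ≤ B) : ∀ t,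
    (∀ v, ((heights n G u h0 t v : ℤ) : ZMod n) = (ghUpdate n G)^[t] u v) ∧
    (∀ a b, G.Adj a b → heights n G u h0 t b - heights n G u h0 t a =
      dInt ((ghUpdate n G)^[t] u b - (ghUpdate n G)^[t] u a)) ∧
    (∀ v, heights n G u h0 t v ≤ B) := by
  intro t
  induction t with
  | zero => exact ⟨hcast0, hedge0, hb0⟩
  | succ t ih =>
    obtain ⟨ihc, ihe, ihb⟩ := ih
    set ut := (ghUpdate n G)^[t] u with hut
    have hcont : contState G ut := by
      intro a b hab
      have h1 : ut a - ut b = ((heights n G u h0 t a - heights n G u h0 t b : ℤ) : ZMod n) := by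
        push_cast
        rw [ihc a, ihc b]
      have h2 := ihe b a hab.symm
      rw [h2] at h1
      rcases dInt_mem (ut a - ut b) with h | h | h <;> rw [h] at h1 <;>
        rw [h1] <;> simp
    refine ⟨?_, ?_, ?_⟩
    · intro v
      show (((heights n G u h0 t v + fireZ n G ut v : ℤ)) : ZMod n) = (ghUpdate n G)^[t+1] u v
      rw [Function.iterate_succ_apply', ← hut, ghUpdate_eq]
      push_cast
      rw [ihc v]
    · intro a b hab
      obtain ⟨he, heq⟩ := gh_key hn G ut hcont hab
      show heights n G u h0 t b + fireZ n G ut b - (heights n G u h0 t a + fireZ n G ut a) = _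
      rw [Function.iterate_succ_apply', ← hut, heq, dInt_intCast hn he]
      have := ihe a b hab
      omega
    · intro v
      show heights n G u h0 t v + fireZ n G ut v ≤ B
      rcases lt_or_eq_of_le (ihb v) with hlt | heq
      · rcases fireZ_mem n G ut v with h | h <;> omega
      · have hf : fireZ n G ut v = 0 := by
          rcases fireZ_mem n G ut v with h | h
          · exact h
          · exfalso
            have hv0 : ut v = 0 := by rw [← ihc v, heq, hBmod]
            have : ¬ (ut v = 0 ∧ ¬ ∃ y, G.Adj v y ∧ ut y = 1) := by
              unfold fireZ at h
              split_ifs at h with hc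
              · simp at h
              · exact hc
            push_neg at this
            obtain ⟨y, hy, hy1⟩ := this hv0
            have he := ihe v y hy
            rw [hy1, hv0, sub_zero] at he
            have h1 : dInt (1 : ZMod n) = 1 := by
              unfold dInt
              rw [if_neg (zmod_facts hn).1, if_pos rfl]
            rw [h1] at he
            have := ihb y
            omega
        omega

lemma sum_dInt_invariant {V : Type*} {n : ℕ} (hn : 3 ≤ n) (G : SimpleGraph V)
    (u : V → ZMod n) (hu : contState G u) (K : ℕ) (x : ℕ → V)
    (hcl : x K = x 0) (hadj : ∀ i < K, G.Adj (x i) (x (i + 1))) :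
    ∑ i ∈ Finset.range K, dInt (ghUpdate n G u (x (i + 1)) - ghUpdate n G u (x i)) =
    ∑ i ∈ Finset.range K, dInt (u (x (i + 1)) - u (x i)) := by
  have hterm : ∀ i ∈ Finset.range K,
      dInt (ghUpdate n G u (x (i + 1)) - ghUpdate n G u (x i)) =
      dInt (u (x (i + 1)) - u (x i)) +
        (fireZ n G u (x (i + 1)) - fireZ n G u (x i)) := by
    intro i hi
    rw [Finset.mem_range] at hi
    obtain ⟨he, heq⟩ := gh_key hn G u hu (hadj i hi)
    rw [heq, dInt_intCast hn he]
    ring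
  rw [Finset.sum_congr rfl hterm, Finset.sum_add_distrib,
    Finset.sum_range_sub (fun i => fireZ n G u (x i)), hcl]
  ring

theorem stmt_10 {V : Type*} [Fintype V] (n : ℕ) (hn : 3 ≤ n) (G : SimpleGraph V)
    (hconn : G.Connected) (u : V → ZMod n) (hu : contState G u) :
    (∃ T : ℕ, ∀ x : V, (ghUpdate n G)^[T] u x = 0) ↔
    (∀ (K : ℕ) (x : ℕ → V), isClosedWalk G K x → degW n u K x = 0) := by
  haveI : NeZero n := ⟨by omega⟩
  constructor
  · rintro ⟨T, hT⟩ K x hcw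
    obtain ⟨hK1, hKcl, hKadj⟩ := hcw
    have hcs : ∀ t, contState G ((ghUpdate n G)^[t] u) := by
      intro t
      induction t with
      | zero => simpa using hu
      | succ t ih =>
        rw [Function.iterate_succ_apply']
        exact contState_ghUpdate hn G _ ih
    have hsum : ∀ t, ∑ i ∈ Finset.range K,
        dInt ((ghUpdate n G)^[t] u (x (i + 1)) - (ghUpdate n G)^[t] u (x i)) =
        ∑ i ∈ Finset.range K, dInt (u (x (i + 1)) - u (x i)) := by
      intro t
      induction t with
      | zero => simp
      | succ t ih =>
        rw [← ih]
        simp only [Function.iterate_succ_apply']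
        exact sum_dInt_invariant hn G _ (hcs t) K x hKcl hKadj
    have hS : ∑ i ∈ Finset.range K, dInt (u (x (i + 1)) - u (x i)) = 0 := by
      rw [← hsum T]
      apply Finset.sum_eq_zero
      intro i _
      rw [hT (x (i + 1)), hT (x i)]
      simp [dInt]
    unfold degW
    rw [hS]
    simp
  · intro hdeg
    obtain ⟨v₀⟩ := hconn.nonempty
    have hreach : ∀ v, G.Reachable v₀ v := fun v => hconn.preconnected v₀ v
    set w : ∀ v, G.Walk v₀ v := fun v => (hreach v).some with hw
    set h0 : V → ℤ := fun v => wsum u (w v) + ((u v₀).val : ℤ) with hh0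
    have hcast0 : ∀ v, ((h0 v : ℤ) : ZMod n) = u v := by
      intro v
      rw [hh0]
      push_cast
      rw [wsum_cast hn hu]
      have : (((u v₀).val : ℕ) : ZMod n) = u v₀ := by
        rw [ZMod.natCast_val, ZMod.cast_id]
      rw [this]
      ring
    have hedge0 : ∀ a b, G.Adj a b → h0 b - h0 a = dInt (u b - u a) := by
      intro a b hab
      have hw2 : wsum u (w b) = wsum u ((w a).append (SimpleGraph.Walk.cons hab .nil)) :=
        wsum_welldef hn hu hdeg _ _
      rw [hh0]
      simp only
      rw [hw2, wsum_append]
      simp [wsum]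
    -- the bound
    have hne : (Finset.univ : Finset V).Nonempty := ⟨v₀, Finset.mem_univ v₀⟩
    set M : ℤ := Finset.univ.sup' hne h0 with hM
    set B : ℤ := (n : ℤ) * max M 0 with hB
    have hb0 : ∀ v, h0 v ≤ B := by
      intro v
      have h1 : h0 v ≤ M := Finset.le_sup' h0 (Finset.mem_univ v)
      have h2 : M ≤ max M 0 := le_max_left _ _
      have h3 : (0 : ℤ) ≤ max M 0 := le_max_right _ _
      have hn3 : (3 : ℤ) ≤ (n : ℤ) := by exact_mod_cast hn
      nlinarith
    have hBmod : ((B : ℤ) : ZMod n) = 0 := by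
      rw [hB]
      push_cast
      simp [ZMod.natCast_self]
    obtain hinv := heights_invariant hn G u h0 B hBmod hcast0 hedge0 hb0
    set H := heights n G u h0 with hH
    set Φ : ℕ → ℤ := fun t => ∑ v : V, (B - H t v) with hΦ
    have hΦpos : ∀ t, 0 ≤ Φ t := by
      intro t
      apply Finset.sum_nonneg
      intro v _
      have := (hinv t).2.2 v
      omega
    have hstep : ∀ t, (∃ v, fireZ n G ((ghUpdate n G)^[t] u) v ≠ 0) → Φ (t + 1) ≤ Φ t - 1 := by
      intro t ⟨v, hv⟩
      have hfv : fireZ n G ((ghUpdate n G)^[t] u) v = 1 := by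
        rcases fireZ_mem n G ((ghUpdate n G)^[t] u) v with h | h
        · exact absurd h hv
        · exact h
      have hΦeq : Φ t - Φ (t + 1) = ∑ x : V, fireZ n G ((ghUpdate n G)^[t] u) x := by
        rw [hΦ]
        simp only
        rw [← Finset.sum_sub_distrib]
        apply Finset.sum_congr rfl
        intro x _
        show B - H t x - (B - H (t + 1) x) = _
        have : H (t + 1) x = H t x + fireZ n G ((ghUpdate n G)^[t] u) x := rfl
        omega
      have hone : (1 : ℤ) ≤ ∑ x : V, fireZ n G ((ghUpdate n G)^[t] u) x := by
        rw [← hfv]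
        apply Finset.single_le_sum (f := fun x => fireZ n G ((ghUpdate n G)^[t] u) x)
          (fun x _ => ?_) (Finset.mem_univ v)
        show (0 : ℤ) ≤ fireZ n G ((ghUpdate n G)^[t] u) x
        rcases fireZ_mem n G ((ghUpdate n G)^[t] u) x with h | h <;> omega
      omega
    have hT : ∃ T, ∀ v, fireZ n G ((ghUpdate n G)^[T] u) v = 0 := by
      by_contra hcon
      push_neg at hcon
      have hdec : ∀ t, Φ t ≤ Φ 0 - t := by
        intro t
        induction t with
        | zero => simp
        | succ t ih =>
          have := hstep t (hcon t)
          push_cast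
          push_cast at ih
          omega
      have h1 := hdec ((Φ 0).toNat + 1)
      have h2 := hΦpos ((Φ 0).toNat + 1)
      have h3 : Φ 0 ≤ ((Φ 0).toNat : ℤ) := Int.self_le_toNat _
      push_cast at h1
      omega
    obtain ⟨T, hT⟩ := hT
    exact ⟨T, fun v => (fireZ_eq_zero (hT v)).1⟩
end

section
/- Let k be an integer with 1 ≤ k ≤ n−1 and let t ≥ k. If u_t(x) = k (as an element of ℤ/nℤ) for a vertex x, then x has a neighbor y with u_t(y) = k + 1 (mod n). In other words, after sufficiently many steps every node in a nonzero state has a neighbor in the next state. -/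
theorem ZMod.natCast_ne_zero_of_lt {n a : ℕ} (h0 : 0 < a) (hn : a < n) : (a : ZMod n) ≠ 0 :=
  (natCast_eq_zero_iff a n).not.mpr (Nat.not_dvd_of_pos_of_lt h0 hn)

section GreenbergHastings

variable {V : Type*} {n : ℕ} {G : SimpleGraph V} {u : V → ZMod n} {x : V}

theorem ghUpdate_apply_of_ne_zero (h : u x ≠ 0) : ghUpdate n G u x = u x + 1 := by
  simp only [ghUpdate, if_neg h]

theorem exists_adj_eq_one_of_ghUpdate_apply_eq_one [Fact (1 < n)] (h : ghUpdate n G u x = 1) :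
    ∃ y, G.Adj x y ∧ u y = 1 := by
  unfold ghUpdate at h
  split_ifs at h with h0 hex
  · exact hex
  · exact absurd h zero_ne_one
  · exact absurd (add_eq_right.mp h) h0

theorem eq_sub_one_of_ghUpdate_apply_eq {a : ZMod n} (h : ghUpdate n G u x = a) (ha0 : a ≠ 0)
    (ha1 : a ≠ 1) : u x = a - 1 := by
  unfold ghUpdate at h
  split_ifs at h
  · exact absurd h.symm ha1
  · exact absurd h.symm ha0
  · rw [← h, add_sub_cancel_right]

theorem iterate_ghUpdate_apply_of_eq_one (h : u x = 1) {m : ℕ} (hm : m < n) :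
    (ghUpdate n G)^[m] u x = m + 1 := by
  induction m with
  | zero => simpa using h
  | succ m ih =>
    have hm0 : (ghUpdate n G)^[m] u x ≠ 0 := by
      rw [ih (by omega)]
      exact_mod_cast ZMod.natCast_ne_zero_of_lt m.succ_pos hm
    rw [Function.iterate_succ_apply', ghUpdate_apply_of_ne_zero hm0, ih (by omega), Nat.cast_succ]

theorem ghUpdate_apply_eq_one_of_iterate_apply_eq {k : ℕ} (hk : 1 ≤ k) (hkn : k < n)
    (h : (ghUpdate n G)^[k] u x = k) : ghUpdate n G u x = 1 := by
  induction k, hk using Nat.le_induction with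
  | base => simpa using h
  | succ k hk ih =>
    rw [Function.iterate_succ_apply', Nat.cast_succ] at h
    have hk0 : (k : ZMod n) ≠ 0 := ZMod.natCast_ne_zero_of_lt hk (by omega)
    have hk1 : (k : ZMod n) + 1 ≠ 0 := by exact_mod_cast ZMod.natCast_ne_zero_of_lt k.succ_pos hkn
    refine ih (by omega) ?_
    simpa using eq_sub_one_of_ghUpdate_apply_eq h hk1 (fun h1 => hk0 (add_eq_right.mp h1))

end GreenbergHastings

theorem stmt_14_general {V : Type*} (n : ℕ) (G : SimpleGraph V)
    (u₀ : V → ZMod n) (k t : ℕ) (hk1 : 1 ≤ k) (hk2 : k ≤ n - 1) (ht : k ≤ t)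
    (x : V) (hx : (ghUpdate n G)^[t] u₀ x = (k : ZMod n)) :
    ∃ y : V, G.Adj x y ∧ (ghUpdate n G)^[t] u₀ y = (k : ZMod n) + 1 := by
  have hkn : k < n := by omega
  have : Fact (1 < n) := ⟨by omega⟩
  have hut : (ghUpdate n G)^[t] u₀ = (ghUpdate n G)^[k] ((ghUpdate n G)^[t - k] u₀) := by
    rw [← Function.iterate_add_apply, Nat.add_sub_cancel' ht]
  rw [hut] at hx ⊢
  obtain ⟨y, hxy, hy⟩ :=
    exists_adj_eq_one_of_ghUpdate_apply_eq_one (ghUpdate_apply_eq_one_of_iterate_apply_eq hk1 hkn hx)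
  exact ⟨y, hxy, iterate_ghUpdate_apply_of_eq_one hy hkn⟩

theorem stmt_14 {V : Type*} [Fintype V] (n : ℕ) (hn : 2 ≤ n) (G : SimpleGraph V)
    (u₀ : V → ZMod n) (k t : ℕ) (hk1 : 1 ≤ k) (hk2 : k ≤ n - 1) (ht : k ≤ t)
    (x : V) (hx : (ghUpdate n G)^[t] u₀ x = (k : ZMod n)) :
    ∃ y : V, G.Adj x y ∧ (ghUpdate n G)^[t] u₀ y = (k : ZMod n) + 1 :=
  stmt_14_general n G u₀ k t hk1 hk2 ht x hx
end
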